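/- Suppose the loss L is μ-strongly convex with μ = max{λ₂, λ₃}, and let ŵ ∈ ℝ^d be a global minimizer of L. Then ‖ŵ − P_k ŵ‖₂² ≤ (2 / (max{λ₂, λ₃} · N₁)) · ŵᵀ (I_d − P_k) ∑_{i∈S} ( x_i − m_i(P_k ŵ) ), where I_d is the d×d identity matrix. (Theorem 1 of the paper; note that x_i − m_i(P_k ŵ) = ( ∑_{j∈R_i} (x_i − x_j) exp(x_jᵀ P_k ŵ) ) / ( ∑_{j∈R_i} exp(x_jᵀ P_k ŵ) ).) -/

import Mathlib

/-!
Compare `L` at the minimizer `ŵ` and at its truncation `P ŵ`. Strong convexity at a global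
minimizer gives `μ/2 ‖ŵ - P ŵ‖² ≤ L (P ŵ) - L ŵ`. Since `P` is idempotent the `λ₂`-terms of the
two losses coincide, the ridge term only decreases under `P`, and the Cox log partial likelihood
is concave (Jensen's inequality for `exp`), so it is bounded by its tangent at `P ŵ`, whose slope
is `∑ (x_i - m_i(P ŵ))`. Finally `P` is self-adjoint, which moves `I - P` from `ŵ - P ŵ` onto
the gradient.
-/

open scoped RealInnerProductSpace BigOperators

open Real Finset

theorem UniformConvexOn.le_sub_of_isMinOn {E : Type*} [NormedAddCommGroup E] [NormedSpace ℝ E]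
    {s : Set E} {φ : ℝ → ℝ} {f : E → ℝ} {v w : E} (hf : UniformConvexOn s φ f)
    (hmin : IsMinOn f s w) (hv : v ∈ s) (hw : w ∈ s) : φ ‖v - w‖ ≤ f v - f w := by
  have hscaled : ∀ b ∈ Set.Ico (0 : ℝ) 1, b * φ ‖v - w‖ ≤ f v - f w := by
    rintro b ⟨hb0, hb1⟩
    have hconv := hf.2 hv hw (sub_pos.2 hb1).le hb0 (sub_add_cancel 1 b)
    have hmid : f w ≤ f ((1 - b) • v + b • w) :=
      hmin (hf.1 hv hw (sub_pos.2 hb1).le hb0 (by ring))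
    simp only [smul_eq_mul] at hconv
    nlinarith
  have hlim : Filter.Tendsto (fun b : ℝ => b * φ ‖v - w‖) (nhdsWithin 1 (Set.Iio 1))
      (nhds (1 * φ ‖v - w‖)) :=
    (Filter.tendsto_id.mul_const _).mono_left nhdsWithin_le_nhds
  rw [one_mul] at hlim
  exact le_of_tendsto hlim (Filter.eventually_of_mem (Ioo_mem_nhdsLT zero_lt_one)
    fun b hb => hscaled b (Set.Ioo_subset_Ico_self hb))

theorem exp_weighted_mean_le_log_sum_exp_sub {ι : Type*} (s : Finset ι) (a b : ι → ℝ) :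
    (∑ j ∈ s, exp (a j))⁻¹ * ∑ j ∈ s, exp (a j) * b j ≤
      log (∑ j ∈ s, exp (a j + b j)) - log (∑ j ∈ s, exp (a j)) := by
  rcases s.eq_empty_or_nonempty with rfl | hs
  · simp
  set B := ∑ j ∈ s, exp (a j)
  have hB : 0 < B := sum_pos (fun _ _ => exp_pos _) hs
  have hA : 0 < ∑ j ∈ s, exp (a j + b j) := sum_pos (fun _ _ => exp_pos _) hs
  have hjensen := convexOn_exp.map_sum_le (t := s) (w := fun j => exp (a j) / B) (p := b)
    (fun _ _ => by positivity) (by rw [← sum_div, div_self hB.ne']) (fun _ _ => Set.mem_univ _)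
  have hmean : ∑ j ∈ s, (exp (a j) / B) • b j = B⁻¹ * ∑ j ∈ s, exp (a j) * b j := by
    simp only [smul_eq_mul, mul_sum, div_eq_inv_mul, mul_assoc]
  have hrhs : ∑ j ∈ s, (exp (a j) / B) • exp (b j) = (∑ j ∈ s, exp (a j + b j)) / B := by
    simp only [smul_eq_mul, sum_div, exp_add, div_mul_eq_mul_div]
  rw [← log_div hA.ne' hB.ne', ← hmean]
  exact (le_log_iff_exp_le (by positivity)).2 (hjensen.trans_eq hrhs)

section Cox

variable {ι E : Type*} [NormedAddCommGroup E] [InnerProductSpace ℝ E]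

noncomputable def softmaxMean (s : Finset ι) (x : ι → E) (u : E) : E :=
  (∑ j ∈ s, exp ⟪x j, u⟫)⁻¹ • ∑ j ∈ s, exp ⟪x j, u⟫ • x j

noncomputable def coxLogLik (x : ι → E) (S : Finset ι) (R : ι → Finset ι) (w : E) : ℝ :=
  ∑ i ∈ S, (⟪x i, w⟫ - log (∑ j ∈ R i, exp ⟪x j, w⟫))

theorem inner_softmaxMean_le_log_sum_exp_sub (s : Finset ι) (x : ι → E) (u w : E) :
    ⟪softmaxMean s x u, w - u⟫ ≤
      log (∑ j ∈ s, exp ⟪x j, w⟫) - log (∑ j ∈ s, exp ⟪x j, u⟫) := by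
  have h := exp_weighted_mean_le_log_sum_exp_sub s (fun j => ⟪x j, u⟫) (fun j => ⟪x j, w - u⟫)
  simp only [← inner_add_right, add_sub_cancel] at h
  simpa only [softmaxMean, real_inner_smul_left, sum_inner] using h

theorem coxLogLik_sub_le (x : ι → E) (S : Finset ι) (R : ι → Finset ι) (u w : E) :
    coxLogLik x S R w - coxLogLik x S R u ≤ ⟪∑ i ∈ S, (x i - softmaxMean (R i) x u), w - u⟫ := by
  rw [coxLogLik, coxLogLik, ← sum_sub_distrib, sum_inner]
  refine sum_le_sum fun i _ => ?_
  have h := inner_softmaxMean_le_log_sum_exp_sub (R i) x u w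
  rw [inner_sub_left, inner_sub_right]
  linarith

end Cox

section CoordProj

variable {ι : Type*} [DecidableEq ι] (K : Finset ι)

def coordProj (w : EuclideanSpace ℝ ι) : EuclideanSpace ℝ ι :=
  WithLp.toLp 2 fun a => if a ∈ K then w a else 0

theorem coordProj_coordProj (w : EuclideanSpace ℝ ι) :
    coordProj K (coordProj K w) = coordProj K w := by
  ext a
  by_cases ha : a ∈ K <;> simp [coordProj, ha]

theorem inner_coordProj_left [Fintype ι] (u v : EuclideanSpace ℝ ι) :
    ⟪coordProj K u, v⟫ = ⟪u, coordProj K v⟫ := by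
  simp only [PiLp.inner_apply]
  refine sum_congr rfl fun a _ => ?_
  by_cases ha : a ∈ K <;> simp [coordProj, ha]

theorem norm_coordProj_sq_le [Fintype ι] (w : EuclideanSpace ℝ ι) :
    ‖coordProj K w‖ ^ 2 ≤ ‖w‖ ^ 2 := by
  simp only [EuclideanSpace.real_norm_sq_eq]
  refine sum_le_sum fun a _ => ?_
  by_cases ha : a ∈ K <;> simp [coordProj, ha, sq_nonneg]

end CoordProj

theorem excel_theorem_1_general
    (N d : ℕ)
    (x : Fin N → EuclideanSpace ℝ (Fin d))
    (S : Finset (Fin N))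
    (N₁ : ℕ)
    (R : Fin N → Finset (Fin N))
    (K : Finset (Fin d))
    (P : EuclideanSpace ℝ (Fin d) → EuclideanSpace ℝ (Fin d))
    (hP : ∀ w (a : Fin d), P w a = if a ∈ K then w a else 0)
    (lam2 lam3 : ℝ) (hlam3 : 0 < lam3)
    (L : EuclideanSpace ℝ (Fin d) → ℝ)
    (hL : ∀ w, L w =
      -(1 / (N₁ : ℝ)) * ∑ i ∈ S, (⟪x i, w⟫ - Real.log (∑ j ∈ R i, Real.exp ⟪x j, w⟫))
      - lam2 / (N₁ : ℝ) * ∑ i ∈ S, (⟪x i, P w⟫ - Real.log (∑ j ∈ R i, Real.exp ⟪x j, P w⟫))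
      + lam3 / 2 * ‖w‖ ^ 2)
    (m : EuclideanSpace ℝ (Fin d) → Fin N → EuclideanSpace ℝ (Fin d))
    (hm : ∀ u i, m u i =
      (∑ j ∈ R i, Real.exp ⟪x j, u⟫)⁻¹ • ∑ j ∈ R i, Real.exp ⟪x j, u⟫ • x j)
    (hstrong : ConvexOn ℝ Set.univ fun w => L w - max lam2 lam3 / 2 * ‖w‖ ^ 2)
    (wh : EuclideanSpace ℝ (Fin d)) (hwh : ∀ w, L wh ≤ L w) :
    ‖wh - P wh‖ ^ 2 ≤ 2 / (max lam2 lam3 * (N₁ : ℝ)) *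
      ⟪wh, (∑ i ∈ S, (x i - m (P wh) i)) - P (∑ i ∈ S, (x i - m (P wh) i))⟫ := by
  obtain rfl : P = coordProj K := funext fun w => by ext a; exact hP w a
  obtain rfl : m = fun u i => softmaxMean (R i) x u := funext₂ hm
  set μ := max lam2 lam3
  set v := ∑ i ∈ S, (x i - softmaxMean (R i) x (coordProj K wh))
  have hμ : 0 < μ := hlam3.trans_le (le_max_right _ _)
  have hgrowth : μ / 2 * ‖wh - coordProj K wh‖ ^ 2 ≤ L (coordProj K wh) - L wh := by
    simpa only [norm_sub_rev] using (strongConvexOn_iff_convex.2 hstrong).le_sub_of_isMinOn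
      (fun w _ => hwh w) (Set.mem_univ (coordProj K wh)) (Set.mem_univ wh)
  have hL' : ∀ w, L w = -(1 / (N₁ : ℝ)) * coxLogLik x S R w
      - lam2 / N₁ * coxLogLik x S R (coordProj K w) + lam3 / 2 * ‖w‖ ^ 2 := hL
  have hdiff : L (coordProj K wh) - L wh ≤ (N₁ : ℝ)⁻¹ * ⟪wh, v - coordProj K v⟫ := by
    have hlik := coxLogLik_sub_le x S R (coordProj K wh) wh
    have hsymm : ⟪v, wh - coordProj K wh⟫ = ⟪wh, v - coordProj K v⟫ := by
      rw [inner_sub_right, inner_sub_right, real_inner_comm wh v, ← inner_coordProj_left,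
        real_inner_comm wh]
    rw [hsymm] at hlik
    have hlik_scaled := mul_le_mul_of_nonneg_left hlik (inv_nonneg.2 (N₁.cast_nonneg (α := ℝ)))
    have hnorm := mul_le_mul_of_nonneg_left (norm_coordProj_sq_le K wh) hlam3.le
    rw [hL', hL', coordProj_coordProj, one_div]
    linarith
  calc ‖wh - coordProj K wh‖ ^ 2 = 2 / μ * (μ / 2 * ‖wh - coordProj K wh‖ ^ 2) := by
        field_simp
    _ ≤ 2 / μ * ((N₁ : ℝ)⁻¹ * ⟪wh, v - coordProj K v⟫) :=
        mul_le_mul_of_nonneg_left (hgrowth.trans hdiff) (by positivity)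
    _ = _ := by ring

/-- Theorem 1 of the paper: upper generalization error bound for a strongly convex
penalized Cox partial likelihood loss. -/
theorem excel_theorem_1
    (N d k : ℕ) (hN : 0 < N) (hd : 0 < d) (hk : 0 < k) (hkd : k ≤ d)
    (x : Fin N → EuclideanSpace ℝ (Fin d))
    (E : Fin N → ℕ) (hE : ∀ i, E i = 0 ∨ E i = 1)
    (T : Fin N → ℝ)
    (S : Finset (Fin N)) (hS : S = Finset.univ.filter fun i => E i = 1)
    (hSne : S.Nonempty)
    (N₁ : ℕ) (hN₁ : N₁ = S.card)
    (R : Fin N → Finset (Fin N))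
    (hR : ∀ i, R i = Finset.univ.filter fun j => T i ≤ T j)
    (K : Finset (Fin d)) (hK : K.card = k)
    (P : EuclideanSpace ℝ (Fin d) → EuclideanSpace ℝ (Fin d))
    (hP : ∀ w (a : Fin d), P w a = if a ∈ K then w a else 0)
    (lam2 lam3 : ℝ) (hlam2 : 0 < lam2) (hlam3 : 0 < lam3)
    (L : EuclideanSpace ℝ (Fin d) → ℝ)
    (hL : ∀ w, L w =
      -(1 / (N₁ : ℝ)) * ∑ i ∈ S, (⟪x i, w⟫ - Real.log (∑ j ∈ R i, Real.exp ⟪x j, w⟫))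
      - lam2 / (N₁ : ℝ) * ∑ i ∈ S, (⟪x i, P w⟫ - Real.log (∑ j ∈ R i, Real.exp ⟪x j, P w⟫))
      + lam3 / 2 * ‖w‖ ^ 2)
    (m : EuclideanSpace ℝ (Fin d) → Fin N → EuclideanSpace ℝ (Fin d))
    (hm : ∀ u i, m u i =
      (∑ j ∈ R i, Real.exp ⟪x j, u⟫)⁻¹ • ∑ j ∈ R i, Real.exp ⟪x j, u⟫ • x j)
    (hstrong : ConvexOn ℝ Set.univ fun w => L w - max lam2 lam3 / 2 * ‖w‖ ^ 2)
    (wh : EuclideanSpace ℝ (Fin d)) (hwh : ∀ w, L wh ≤ L w) :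
    ‖wh - P wh‖ ^ 2 ≤ 2 / (max lam2 lam3 * (N₁ : ℝ)) *
      ⟪wh, (∑ i ∈ S, (x i - m (P wh) i)) - P (∑ i ∈ S, (x i - m (P wh) i))⟫ :=
  excel_theorem_1_general N d x S N₁ R K P hP lam2 lam3 hlam3 L hL m hm hstrong wh hwh
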